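/- Let G = (V,E) be a finite simple graph and let g : V → ℝ be locally injective. Then, as polynomials in t, f_G(t) = 1 + t · Σ_{v ∈ V} f_{S_g^-(v)}(t). -/

import Mathlib

/-!
Every nonempty clique `x` of `G` has a unique `g`-maximal vertex `v`: `g` is injective on `x`
because its vertices are pairwise adjacent. Then `x \ {v}` is a (possibly empty) clique of
`S_g^-(v)`, and conversely adding `v` to any clique of `S_g^-(v)` gives a clique of `G` whose
`g`-maximum is `v`. So the nonempty cliques of `G` correspond bijectively to the pairs `(v, s)` with
`s` a clique of `S_g^-(v)`, the size going up by one, which is the factor `t`.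
-/

open Finset
open scoped Classical

/-- The cliques of the graph `G` contained in the vertex set `A`
(nonempty sets of pairwise adjacent vertices). -/
noncomputable def cliquesOn {V : Type*} (G : SimpleGraph V) (A : Finset V) :
    Finset (Finset V) :=
  A.powerset.filter (fun s => s.Nonempty ∧ G.IsClique (s : Set V))

/-- The f-polynomial of the subgraph of `G` induced on `A`:
`f(t) = 1 + Σ_k f_k t^{k+1}` where `f_k` counts the `(k+1)`-element cliques;
equivalently `1 + Σ_{x clique ⊆ A} t^{|x|}`. -/
noncomputable def fPolyOn {V : Type*} (G : SimpleGraph V) (A : Finset V) :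
    Polynomial ℤ :=
  1 + ∑ s ∈ cliquesOn G A, Polynomial.X ^ s.card

/-- The vertex set of `S_g^-(v)`: the neighbours `w` of `v` with `g w < g v`. -/
noncomputable def sphereMinus {V : Type*} [Fintype V] (G : SimpleGraph V)
    (g : V → ℝ) (v : V) : Finset V :=
  Finset.univ.filter (fun w => G.Adj v w ∧ g w < g v)

noncomputable def cliquesOnWithEmpty {V : Type*} (G : SimpleGraph V) (A : Finset V) :
    Finset (Finset V) :=
  A.powerset.filter (fun s => G.IsClique (s : Set V))

section Cliques

variable {V : Type*} {G : SimpleGraph V} {A s : Finset V}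

theorem mem_cliquesOn :
    s ∈ cliquesOn G A ↔ s ⊆ A ∧ s.Nonempty ∧ G.IsClique (s : Set V) := by
  simp only [cliquesOn, mem_filter, mem_powerset]

theorem mem_cliquesOnWithEmpty :
    s ∈ cliquesOnWithEmpty G A ↔ s ⊆ A ∧ G.IsClique (s : Set V) := by
  simp only [cliquesOnWithEmpty, mem_filter, mem_powerset]

theorem cliquesOnWithEmpty_eq_insert_empty (G : SimpleGraph V) (A : Finset V) :
    cliquesOnWithEmpty G A = insert ∅ (cliquesOn G A) := by
  ext s
  rcases s.eq_empty_or_nonempty with rfl | hs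
  · simp [mem_cliquesOnWithEmpty]
  · simp [mem_cliquesOnWithEmpty, mem_cliquesOn, hs, hs.ne_empty]

theorem fPolyOn_eq_sum_cliquesOnWithEmpty (G : SimpleGraph V) (A : Finset V) :
    fPolyOn G A = ∑ s ∈ cliquesOnWithEmpty G A, Polynomial.X ^ s.card := by
  rw [cliquesOnWithEmpty_eq_insert_empty, sum_insert (by simp [mem_cliquesOn]), fPolyOn,
    card_empty, pow_zero]

end Cliques

section SphereMinus

variable {V : Type*} [Fintype V] {G : SimpleGraph V} {g : V → ℝ} {v w : V}

theorem mem_sphereMinus : w ∈ sphereMinus G g v ↔ G.Adj v w ∧ g w < g v := by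
  simp only [sphereMinus, mem_filter, mem_univ, true_and]

theorem self_notMem_sphereMinus : v ∉ sphereMinus G g v :=
  fun h => G.loopless.irrefl v (mem_sphereMinus.1 h).1

theorem insert_mem_cliquesOn_univ {s : Finset V}
    (hs : s ∈ cliquesOnWithEmpty G (sphereMinus G g v)) :
    insert v s ∈ cliquesOn G univ := by
  obtain ⟨hsub, hcl⟩ := mem_cliquesOnWithEmpty.1 hs
  refine mem_cliquesOn.2 ⟨subset_univ _, insert_nonempty v s, ?_⟩
  rw [coe_insert, SimpleGraph.isClique_insert]
  exact ⟨hcl, fun w hw _ => (mem_sphereMinus.1 (hsub hw)).1⟩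

/-- A vertex `v` is recovered from `insert v s` as its unique `g`-maximum. -/
theorem eq_and_eq_of_insert_eq_insert {v' : V} {s s' : Finset V}
    (hs : s ⊆ sphereMinus G g v) (hs' : s' ⊆ sphereMinus G g v')
    (h : insert v s = insert v' s') : v = v' ∧ s = s' := by
  have hv : v = v' := by
    by_contra hne
    have hvs' : v ∈ s' := (mem_insert.1 (h ▸ mem_insert_self v s)).resolve_left hne
    have hv's : v' ∈ s := (mem_insert.1 (h ▸ mem_insert_self v' s')).resolve_left (Ne.symm hne)
    exact (mem_sphereMinus.1 (hs hv's)).2.asymm (mem_sphereMinus.1 (hs' hvs')).2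
  subst hv
  refine ⟨rfl, ?_⟩
  rw [← erase_insert (fun h => self_notMem_sphereMinus (hs h)), h,
    erase_insert (fun h => self_notMem_sphereMinus (hs' h))]

theorem exists_insert_eq_of_mem_cliquesOn (hg : ∀ v w : V, G.Adj v w → g v ≠ g w)
    {x : Finset V} (hx : x ∈ cliquesOn G univ) :
    ∃ v, ∃ s ∈ cliquesOnWithEmpty G (sphereMinus G g v), insert v s = x := by
  obtain ⟨-, hne, hcl⟩ := mem_cliquesOn.1 hx
  obtain ⟨m, hm, hmax⟩ := x.exists_max_image g hne
  refine ⟨m, x.erase m, mem_cliquesOnWithEmpty.2 ⟨?_, hcl.subset (erase_subset m x)⟩,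
    insert_erase hm⟩
  intro w hw
  have hadj : G.Adj m w := hcl hm (mem_of_mem_erase hw) (ne_of_mem_erase hw).symm
  exact mem_sphereMinus.2
    ⟨hadj, (hmax w (mem_of_mem_erase hw)).lt_of_ne fun h => hg m w hadj h.symm⟩

theorem sum_cliquesOn_univ_eq_sum_sigma {M : Type*} [AddCommMonoid M]
    (hg : ∀ v w : V, G.Adj v w → g v ≠ g w) (f : Finset V → M) :
    ∑ x ∈ cliquesOn G univ, f x =
      ∑ p ∈ univ.sigma (fun v => cliquesOnWithEmpty G (sphereMinus G g v)),
        f (insert p.1 p.2) := by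
  symm
  refine sum_bij (fun p _ => insert p.1 p.2)
    (fun p hp => insert_mem_cliquesOn_univ (mem_sigma.1 hp).2) ?_ ?_ fun _ _ => rfl
  · rintro ⟨v, s⟩ hp ⟨v', s'⟩ hp' h
    obtain ⟨rfl, rfl⟩ := eq_and_eq_of_insert_eq_insert
      (mem_cliquesOnWithEmpty.1 (mem_sigma.1 hp).2).1
      (mem_cliquesOnWithEmpty.1 (mem_sigma.1 hp').2).1 h
    rfl
  · intro x hx
    obtain ⟨v, s, hs, rfl⟩ := exists_insert_eq_of_mem_cliquesOn hg hx
    exact ⟨⟨v, s⟩, mem_sigma.2 ⟨mem_univ v, hs⟩, rfl⟩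

theorem X_mul_fPolyOn_sphereMinus (G : SimpleGraph V) (g : V → ℝ) (v : V) :
    Polynomial.X * fPolyOn G (sphereMinus G g v) =
      ∑ s ∈ cliquesOnWithEmpty G (sphereMinus G g v), Polynomial.X ^ (insert v s).card := by
  rw [fPolyOn_eq_sum_cliquesOnWithEmpty, mul_sum]
  refine sum_congr rfl fun s hs => ?_
  rw [card_insert_of_notMem
    (fun h => self_notMem_sphereMinus ((mem_cliquesOnWithEmpty.1 hs).1 h)), pow_succ']

end SphereMinus

/-- For a locally injective function `g` on a finite simple graph `G`,
`f_G(t) = 1 + t · Σ_v f_{S_g^-(v)}(t)` as polynomials. -/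
theorem fPoly_eq_one_add_X_mul_sum {V : Type*} [Fintype V] (G : SimpleGraph V)
    (g : V → ℝ) (hg : ∀ v w : V, G.Adj v w → g v ≠ g w) :
    fPolyOn G Finset.univ =
      1 + Polynomial.X * ∑ v : V, fPolyOn G (sphereMinus G g v) := by
  simp_rw [mul_sum, X_mul_fPolyOn_sphereMinus]
  rw [fPolyOn, sum_cliquesOn_univ_eq_sum_sigma hg, sum_sigma]
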